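/- Let π be a policy on a finite-horizon MDP with transition model P̄, rewards in [0,1] and horizon H, and let v = (v_h)_{h∈[H+1]} be any function satisfying v_{H+1} = 0, v_h(s) ≥ max_a (r_h(s,a) + P̄_{h,s,a}·v_{h+1}) for all (h,s), and v_h(s) ≤ H−h+1. Then sum over (h,s,a) of d^π_h(s,a) * Var(P̄_{h,s,a}, v_{h+1}) ≤ 4H^2, where d^π_h(s,a) is the occupancy measure of π under P̄ and Var(p, f) = p·f² − (p·f)². -/

import Mathlib

/-!
The occupancy measure factors as `d_h(s, a) = μ_h(s) π_h(s, a)`, where `μ_h` is the law of the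
state at step `h`. Write `q = P̄_{h,s,a} · v_{h+1}`; the variance is
`(P̄_{h,s,a} · v_{h+1}² − v_h(s)²) + (v_h(s)² − q²)`. Averaged over `d_h` and summed over `h`, the
first part telescopes to `E_{μ_H}[v_H²] − v_0(s_0)² = −v_0(s_0)²`. For the second, the Bellman
inequality with `r ≥ 0` gives `q ≤ v_h(s) ≤ H`, so `v_h(s)² − q² ≤ 2H (v_h(s) − q)`, whose average
again telescopes, to `2H v_0(s_0)`. Hence the sum is at most `2H v_0(s_0) − v_0(s_0)² ≤ H²`.
-/

open Finset

noncomputable def trajProb (H : ℕ) {S A : Type} [Fintype S] [Fintype A] [DecidableEq S]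
    (π : ℕ → S → A → ℝ) (p : ℕ → S → A → S → ℝ) (s0 : S)
    (s : Fin (H + 1) → S) (a : Fin H → A) : ℝ :=
  (if s 0 = s0 then (1 : ℝ) else 0) *
    ∏ h : Fin H, (π h (s h.castSucc) (a h) * p h (s h.castSucc) (a h) (s h.succ))

noncomputable def W (H : ℕ) {S A : Type} [Fintype S] [Fintype A] [DecidableEq S]
    (π : ℕ → S → A → ℝ) (p : ℕ → S → A → S → ℝ) (s0 : S)
    (u : ℕ → S → A → ℝ) : ℝ :=
  ∑ s : Fin (H + 1) → S, ∑ a : Fin H → A,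
    trajProb H π p s0 s a * ∑ h : Fin H, u h (s h.castSucc) (a h)

/-- Occupancy measure `d^π_h(s,a)`. -/
noncomputable def occ (H : ℕ) {S A : Type} [Fintype S] [Fintype A] [DecidableEq S]
    [DecidableEq A] (π : ℕ → S → A → ℝ) (p : ℕ → S → A → S → ℝ) (s0 : S)
    (h0 : ℕ) (s1 : S) (a1 : A) : ℝ :=
  W H π p s0 (fun h s a => if h = h0 ∧ s = s1 ∧ a = a1 then 1 else 0)

lemma sum_pi_fin_succ_snoc {n : ℕ} {T : Type} [Fintype T] (F : (Fin (n + 1) → T) → ℝ) :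
    ∑ g : Fin (n + 1) → T, F g = ∑ x : T, ∑ f : Fin n → T, F (Fin.snoc f x) := by
  rw [← (Fin.snocEquiv fun _ => T).sum_comp F, Fintype.sum_prod_type]
  rfl

section OneStep

variable {S A : Type} [Fintype S] [Fintype A]

noncomputable def stepDist (π : S → A → ℝ) (p : S → A → S → ℝ) (μ : S → ℝ) (s' : S) : ℝ :=
  ∑ s, ∑ a, μ s * π s a * p s a s'

lemma sum_stepDist_mul (π : S → A → ℝ) (p : S → A → S → ℝ) (μ f : S → ℝ) :
    ∑ s', stepDist π p μ s' * f s' = ∑ s, ∑ a, μ s * π s a * ∑ s', p s a s' * f s' := by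
  simp only [stepDist, Finset.sum_mul, Finset.mul_sum]
  rw [Finset.sum_comm]
  refine Finset.sum_congr rfl fun s _ => ?_
  rw [Finset.sum_comm]
  exact Finset.sum_congr rfl fun a _ => Finset.sum_congr rfl fun s' _ => by ring

lemma sum_sum_mul_of_sum_eq_one {π : S → A → ℝ} (hπ : ∀ s, ∑ a, π s a = 1) (μ f : S → ℝ) :
    ∑ s, ∑ a, μ s * π s a * f s = ∑ s, μ s * f s := by
  refine Finset.sum_congr rfl fun s _ => ?_
  rw [← Finset.sum_mul, ← Finset.mul_sum, hπ, mul_one]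

lemma sq_sub_sq_le_mul_sub {x q c : ℝ} (hq : q ≤ x) (hx : x ≤ c) :
    x ^ 2 - q ^ 2 ≤ 2 * c * (x - q) := by
  nlinarith

theorem sum_mul_variance_le {μ : S → ℝ} (hμ : ∀ s, 0 ≤ μ s) {π : S → A → ℝ}
    (hπ0 : ∀ s a, 0 ≤ π s a) (hπ1 : ∀ s, ∑ a, π s a = 1) (p : S → A → S → ℝ) {v v' : S → ℝ}
    {c : ℝ} (hback : ∀ s a, ∑ s', p s a s' * v' s' ≤ v s) (hc : ∀ s, v s ≤ c) :
    ∑ s, ∑ a, μ s * π s a * (∑ s', p s a s' * v' s' ^ 2 - (∑ s', p s a s' * v' s') ^ 2)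
      ≤ (∑ s, stepDist π p μ s * v' s ^ 2 - ∑ s, μ s * v s ^ 2)
        + 2 * c * (∑ s, μ s * v s - ∑ s, stepDist π p μ s * v' s) := by
  have hrhs : (∑ s, stepDist π p μ s * v' s ^ 2 - ∑ s, μ s * v s ^ 2)
        + 2 * c * (∑ s, μ s * v s - ∑ s, stepDist π p μ s * v' s)
      = ∑ s, ∑ a, μ s * π s a * ((∑ s', p s a s' * v' s' ^ 2 - v s ^ 2)
          + 2 * c * (v s - ∑ s', p s a s' * v' s')) := by
    simp only [sum_stepDist_mul, ← sum_sum_mul_of_sum_eq_one hπ1 μ, ← Finset.sum_sub_distrib,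
      Finset.mul_sum _ _ (2 * c), ← Finset.sum_add_distrib]
    refine Finset.sum_congr rfl fun s _ => Finset.sum_congr rfl fun a _ => by ring
  rw [hrhs]
  gcongr with s _ a _
  · exact mul_nonneg (hμ s) (hπ0 s a)
  · linarith [sq_sub_sq_le_mul_sub (hback s a) (hc s)]

end OneStep

section Trajectory

variable {S A : Type} [Fintype S] [Fintype A] [DecidableEq S]
  (π : ℕ → S → A → ℝ) (p : ℕ → S → A → S → ℝ) (s0 : S)

noncomputable def stateDist : ℕ → S → ℝ
  | 0 => fun s => if s = s0 then 1 else 0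
  | h + 1 => stepDist (π h) (p h) (stateDist h)

lemma stateDist_nonneg (hπ0 : ∀ h s a, 0 ≤ π h s a) (hp0 : ∀ h s a s', 0 ≤ p h s a s')
    (h : ℕ) (s : S) : 0 ≤ stateDist π p s0 h s := by
  induction h generalizing s with
  | zero => simp only [stateDist]; positivity
  | succ h ih =>
    exact Finset.sum_nonneg fun s _ => Finset.sum_nonneg fun a _ =>
      mul_nonneg (mul_nonneg (ih s) (hπ0 h s a)) (hp0 h s a _)

lemma sum_stateDist_zero_mul (f : S → ℝ) : ∑ s, stateDist π p s0 0 s * f s = f s0 := by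
  simp [stateDist]

lemma trajProb_snoc (H : ℕ) (s : Fin (H + 1) → S) (a : Fin H → A) (x : S) (b : A) :
    trajProb (H + 1) π p s0 (Fin.snoc s x) (Fin.snoc a b)
      = trajProb H π p s0 s a * (π H (s (Fin.last H)) b * p H (s (Fin.last H)) b x) := by
  have h0 : (Fin.snoc s x : Fin (H + 2) → S) 0 = s 0 := Fin.snoc_castSucc (α := fun _ => S) x s 0
  simp only [trajProb, Fin.prod_univ_castSucc, h0, Fin.val_castSucc, Fin.snoc_castSucc,
    Fin.succ_castSucc, Fin.snoc_last, Fin.succ_last, Fin.val_last]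
  ring

lemma sum_trajProb_succ_mul (H : ℕ) (g : (Fin (H + 2) → S) → (Fin (H + 1) → A) → ℝ) :
    ∑ s, ∑ a, trajProb (H + 1) π p s0 s a * g s a
      = ∑ s, ∑ a, trajProb H π p s0 s a *
          ∑ b, π H (s (Fin.last H)) b *
            ∑ x, p H (s (Fin.last H)) b x * g (Fin.snoc s x) (Fin.snoc a b) := by
  rw [sum_pi_fin_succ_snoc, Finset.sum_comm]
  refine Finset.sum_congr rfl fun s _ => ?_
  simp only [sum_pi_fin_succ_snoc (fun a => trajProb (H + 1) π p s0 _ a * _), trajProb_snoc,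
    Finset.mul_sum]
  rw [Finset.sum_comm, Finset.sum_congr rfl fun _ _ => Finset.sum_comm, Finset.sum_comm]
  exact Finset.sum_congr rfl fun a _ => Finset.sum_congr rfl fun b _ =>
    Finset.sum_congr rfl fun x _ => by ring

lemma sum_trajProb_mul_last (H : ℕ) (f : S → ℝ) :
    ∑ s, ∑ a, trajProb H π p s0 s a * f (s (Fin.last H)) = ∑ s, stateDist π p s0 H s * f s := by
  induction H generalizing f with
  | zero =>
    rw [sum_pi_fin_succ_snoc]
    simp [trajProb, stateDist, Fin.snoc]
  | succ H ih =>
    rw [sum_trajProb_succ_mul π p s0 H fun s _ => f (s (Fin.last (H + 1)))]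
    simp only [Fin.snoc_last]
    rw [ih fun y => ∑ b, π H y b * ∑ x, p H y b x * f x]
    rw [stateDist, sum_stepDist_mul]
    simp only [Finset.mul_sum, mul_assoc]

variable {π p} in
lemma W_eq_sum_stateDist (hπ : ∀ h s, ∑ a, π h s a = 1) (hp : ∀ h s a, ∑ s', p h s a s' = 1)
    (H : ℕ) (u : ℕ → S → A → ℝ) :
    W H π p s0 u = ∑ h ∈ Finset.range H, ∑ s, ∑ a, stateDist π p s0 h s * π h s a * u h s a := by
  induction H with
  | zero => simp [W]
  | succ H ih =>
    have hlast : ∀ (s : Fin (H + 1) → S) (a : Fin H → A),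
        ∑ b, π H (s (Fin.last H)) b * ∑ x, p H (s (Fin.last H)) b x *
            ∑ h : Fin (H + 1),
              u h ((Fin.snoc s x : Fin (H + 2) → S) h.castSucc) ((Fin.snoc a b : Fin (H + 1) → A) h)
          = ∑ h : Fin H, u h (s h.castSucc) (a h)
            + ∑ b, π H (s (Fin.last H)) b * u H (s (Fin.last H)) b := by
      intro s a
      simp only [Fin.sum_univ_castSucc, Fin.snoc_castSucc, Fin.snoc_last, Fin.val_last,
        Fin.val_castSucc, ← Finset.sum_mul, hp, one_mul, mul_add, Finset.sum_add_distrib, hπ]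
    rw [W, sum_trajProb_succ_mul]
    simp only [hlast, mul_add, Finset.sum_add_distrib]
    rw [← W, ih, sum_trajProb_mul_last π p s0 H fun y => ∑ b, π H y b * u H y b,
      Finset.sum_range_succ]
    simp only [Finset.mul_sum, mul_assoc]

variable {π p} in
lemma occ_eq_stateDist_mul [DecidableEq A] (hπ : ∀ h s, ∑ a, π h s a = 1)
    (hp : ∀ h s a, ∑ s', p h s a s' = 1) {H h : ℕ} (hh : h < H) (s : S) (a : A) :
    occ H π p s0 h s a = stateDist π p s0 h s * π h s a := by
  rw [occ, W_eq_sum_stateDist s0 hπ hp]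
  simp [ite_and, hh]

end Trajectory

/-- **Law-of-total-variance bound (Bound of T₂).** For a policy `π`, a transition model
`P̄`, rewards in `[0,1]`, and an optimistic value function `v` (vanishing at horizon,
dominating the Bellman backup, and bounded by the remaining horizon), the cumulative
occupancy-weighted variance of `v` is at most `4H²`. (Steps are 0-indexed: `v_h ≤ H−h`
here corresponds to `v_h ≤ H−h+1` in 1-indexed notation.) -/
theorem stmt14 {S A : Type} [Fintype S] [Fintype A] [DecidableEq S] [DecidableEq A]
    (H : ℕ) (π : ℕ → S → A → ℝ)
    (hπ : ∀ h s, (∀ a, 0 ≤ π h s a) ∧ ∑ a, π h s a = 1)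
    (P : ℕ → S → A → S → ℝ)
    (hP : ∀ h s a, (∀ s', 0 ≤ P h s a s') ∧ ∑ s', P h s a s' = 1)
    (r : ℕ → S → A → ℝ) (hr : ∀ h s a, r h s a ∈ Set.Icc (0 : ℝ) 1)
    (s0 : S) (v : ℕ → S → ℝ) (hvH : ∀ s, v H s = 0)
    (hbell : ∀ h, h < H → ∀ s a, r h s a + ∑ s', P h s a s' * v (h + 1) s' ≤ v h s)
    (hub : ∀ h, h < H → ∀ s, v h s ≤ ((H - h : ℕ) : ℝ)) :
    ∑ h ∈ Finset.range H, ∑ s : S, ∑ a : A,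
        occ H π P s0 h s a *
          ((∑ s', P h s a s' * (v (h + 1) s') ^ 2)
            - (∑ s', P h s a s' * v (h + 1) s') ^ 2)
      ≤ 4 * (H : ℝ) ^ 2 := by
  choose hπ0 hπ1 using hπ
  choose hP0 hP1 using hP
  set μ := stateDist π P s0
  set mean : ℕ → ℝ := fun h => ∑ s, μ h s * v h s
  set sqMean : ℕ → ℝ := fun h => ∑ s, μ h s * v h s ^ 2
  have hstep : ∀ h ∈ Finset.range H,
      ∑ s, ∑ a, occ H π P s0 h s a *
          ((∑ s', P h s a s' * (v (h + 1) s') ^ 2) - (∑ s', P h s a s' * v (h + 1) s') ^ 2)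
        ≤ (sqMean (h + 1) - sqMean h) + 2 * H * (mean h - mean (h + 1)) := by
    intro h hh
    replace hh : h < H := Finset.mem_range.mp hh
    simp only [occ_eq_stateDist_mul s0 hπ1 hP1 hh]
    refine sum_mul_variance_le (stateDist_nonneg π P s0 hπ0 hP0 h) (hπ0 h) (hπ1 h) (P h)
      (fun s a => ?_) (fun s => ?_)
    · linarith [hbell h hh s a, (hr h s a).1]
    · exact (hub h hh s).trans (by exact_mod_cast Nat.sub_le H h)
  have hstart : mean 0 = v 0 s0 ∧ sqMean 0 = v 0 s0 ^ 2 :=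
    ⟨sum_stateDist_zero_mul π P s0 _, sum_stateDist_zero_mul π P s0 _⟩
  have hend : mean H = 0 ∧ sqMean H = 0 := by simp [mean, sqMean, hvH]
  calc _ ≤ _ := Finset.sum_le_sum hstep
    _ = (sqMean H - sqMean 0) + 2 * H * (mean 0 - mean H) := by
      rw [Finset.sum_add_distrib, ← Finset.mul_sum, Finset.sum_range_sub, Finset.sum_range_sub']
    _ ≤ 4 * (H : ℝ) ^ 2 := by
      rw [hstart.1, hstart.2, hend.1, hend.2]
      nlinarith [sq_nonneg (v 0 s0 - H)]
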